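/- arXiv:2410.16849 — 4 statements merged into one kernel-verified Lean document; each statement's English description precedes it below -/
import Mathlib

section
/- Let 0 < μ < L and κ := L/μ. Set γ* := 4/(√μ + √L)² and β* := ((√κ − 1)/(√κ + 1))². Then β* ∈ (0,1), γ* ∈ (0, 2(1+β*)/L), m(γ*, β*) = (√κ − 1)/(√κ + 1), and for every β ∈ (0,1) and γ ∈ (0, 2(1+β)/L) one has m(γ, β) ≥ (√κ − 1)/(√κ + 1); i.e., the choice (γ*, β*) minimizes m(γ, β). -/
/-- The convergence rate `m(γ, β)` of Polyak's heavy ball method, for `0 < μ ≤ L`,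
`β ∈ (0,1)` and `γ ∈ (0, 2(1+β)/L)`. -/
noncomputable def heavyBallRate (μ L β γ : ℝ) : ℝ :=
  if (1 - Real.sqrt β) ^ 2 / μ ≤ γ ∧ γ ≤ (1 + Real.sqrt β) ^ 2 / L then Real.sqrt β
  else if γ ≤ 2 * (1 + β) / (L + μ) then
    (1 + β - γ * μ) / 2 + Real.sqrt (((1 + β - γ * μ) / 2) ^ 2 - β)
  else (γ * L - (1 + β)) / 2 + Real.sqrt (((γ * L - (1 + β)) / 2) ^ 2 - β)

/-- Key algebraic lemma: if `x ≥ (1+β)(q²-p²)/(2(q²+p²))`, then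
`x + √(x² - β) ≥ (q-p)/(q+p)`. -/
private lemma hb_key_aux (p q β : ℝ) (hp : 0 < p) (hpq : p < q)
    (hβ0 : 0 < β) (hβ1 : β < 1) (x : ℝ)
    (hx : (1 + β) * (q ^ 2 - p ^ 2) / (2 * (q ^ 2 + p ^ 2)) ≤ x) :
    (q - p) / (q + p) ≤ x + Real.sqrt (x ^ 2 - β) := by
  have hq : 0 < q := hp.trans hpq
  have hqp : 0 < q + p := by linarith
  set r : ℝ := (q - p) / (q + p) with hrdef
  have hr0 : 0 ≤ r := div_nonneg (by linarith) hqp.le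
  have hr1 : r < 1 := by rw [hrdef, div_lt_one hqp]; linarith
  rcases le_or_gt r x with h | h
  · have := Real.sqrt_nonneg (x ^ 2 - β); linarith
  · -- x < r
    set c : ℝ := (q ^ 2 - p ^ 2) / (2 * (q ^ 2 + p ^ 2)) with hcdef
    have hc0 : 0 < c := by
      apply div_pos (by nlinarith) (by positivity)
    have hc : c * (1 + r ^ 2) = r := by
      rw [hcdef, hrdef]
      field_simp
      ring
    have hx' : (1 + β) * c ≤ x := by rw [hcdef, ← mul_div_assoc]; exact hx
    have hβr : β < r ^ 2 := by nlinarith [hx', hc, hc0, h]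
    have hr2 : r ^ 2 < 1 := by nlinarith
    -- 2 x r ≥ r² + β
    have hmain : r ^ 2 + β ≤ 2 * x * r := by
      have h1 : 0 ≤ (r ^ 2 - β) * (1 - r ^ 2) :=
        mul_nonneg (by linarith) (by linarith)
      have h2 : 2 * r * ((1 + β) * c) ≤ 2 * r * x :=
        mul_le_mul_of_nonneg_left hx' (by positivity)
      have h3 : 2 * (1 + β) * r * (c * (1 + r ^ 2)) = 2 * (1 + β) * r ^ 2 := by
        rw [hc]; ring
      have h4 : (r ^ 2 + β) * (1 + r ^ 2) ≤ 2 * x * r * (1 + r ^ 2) := by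
        have h5 : (r ^ 2 + β) * (1 + r ^ 2) ≤ 2 * (1 + β) * r ^ 2 := by nlinarith
        have h6 : 2 * r * ((1 + β) * c) * (1 + r ^ 2) ≤ 2 * r * x * (1 + r ^ 2) :=
          mul_le_mul_of_nonneg_right h2 (by positivity)
        nlinarith
      have h7 : (0:ℝ) < 1 + r ^ 2 := by positivity
      exact le_of_mul_le_mul_right h4 h7
    have hsq : (r - x) ^ 2 ≤ x ^ 2 - β := by nlinarith
    have hle : r - x ≤ Real.sqrt (x ^ 2 - β) := by
      calc r - x = Real.sqrt ((r - x) ^ 2) := (Real.sqrt_sq (by linarith)).symm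
        _ ≤ Real.sqrt (x ^ 2 - β) := Real.sqrt_le_sqrt hsq
    linarith

private lemma hb_branch1 (p q s : ℝ) (hp : 0 < p) (hpq : p < q) (hs0 : 0 ≤ s) (hs1 : s < 1)
    (h : q ^ 2 * (1 - s) ^ 2 ≤ p ^ 2 * (1 + s) ^ 2) : (q - p) / (q + p) ≤ s := by
  have hq : 0 < q := hp.trans hpq
  have hAB : 0 < q * (1 - s) + p * (1 + s) := by nlinarith
  have h2 : q * (1 - s) ≤ p * (1 + s) := by nlinarith
  rw [div_le_iff₀ (by linarith)]
  nlinarith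

/-- **Optimal hyperparameters for Polyak's heavy ball method.**
Let `0 < μ < L` and `κ = L/μ`. With `γ* = 4/(√μ + √L)²` and `β* = ((√κ - 1)/(√κ + 1))²`,
one has `β* ∈ (0,1)`, `γ* ∈ (0, 2(1+β*)/L)`, `m(γ*, β*) = (√κ - 1)/(√κ + 1)`, and for all
admissible `β ∈ (0,1)` and `γ ∈ (0, 2(1+β)/L)`, `m(γ, β) ≥ (√κ - 1)/(√κ + 1)`. -/
theorem heavy_ball_rate_minimized_at_optimal_parameters (μ L : ℝ) (hμ : 0 < μ) (hμL : μ < L) :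
    ((Real.sqrt (L / μ) - 1) / (Real.sqrt (L / μ) + 1)) ^ 2 ∈ Set.Ioo (0 : ℝ) 1 ∧
    (4 / (Real.sqrt μ + Real.sqrt L) ^ 2) ∈
      Set.Ioo 0 (2 * (1 + ((Real.sqrt (L / μ) - 1) / (Real.sqrt (L / μ) + 1)) ^ 2) / L) ∧
    heavyBallRate μ L (((Real.sqrt (L / μ) - 1) / (Real.sqrt (L / μ) + 1)) ^ 2)
        (4 / (Real.sqrt μ + Real.sqrt L) ^ 2) =
      (Real.sqrt (L / μ) - 1) / (Real.sqrt (L / μ) + 1) ∧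
    ∀ β ∈ Set.Ioo (0 : ℝ) 1, ∀ γ ∈ Set.Ioo (0 : ℝ) (2 * (1 + β) / L),
      (Real.sqrt (L / μ) - 1) / (Real.sqrt (L / μ) + 1) ≤ heavyBallRate μ L β γ := by
  have hL : 0 < L := hμ.trans hμL
  set p : ℝ := Real.sqrt μ with hpdef
  set q : ℝ := Real.sqrt L with hqdef
  have hp : 0 < p := Real.sqrt_pos.mpr hμ
  have hq : 0 < q := Real.sqrt_pos.mpr hL
  have hpq : p < q := Real.sqrt_lt_sqrt hμ.le hμL
  have hp2 : p ^ 2 = μ := Real.sq_sqrt hμ.le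
  have hq2 : q ^ 2 = L := Real.sq_sqrt hL.le
  have hqp : 0 < q + p := by linarith
  have hr : (Real.sqrt (L / μ) - 1) / (Real.sqrt (L / μ) + 1) = (q - p) / (q + p) := by
    rw [Real.sqrt_div hL.le, ← hpdef, ← hqdef]
    rw [div_sub_one hp.ne', div_add_one hp.ne']
    field_simp
  rw [hr]
  set r : ℝ := (q - p) / (q + p) with hrdef
  have hr0 : 0 < r := div_pos (by linarith) hqp
  have hr1 : r < 1 := by rw [hrdef, div_lt_one hqp]; linarith
  have hrsq : r ^ 2 * (q + p) ^ 2 = (q - p) ^ 2 := by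
    rw [hrdef]; field_simp
  refine ⟨⟨by positivity, by nlinarith⟩, ⟨by positivity, ?_⟩, ?_, ?_⟩
  · -- γ* < 2(1+r²)/L
    rw [div_lt_div_iff₀ (by positivity) hL]
    have : (p + q) ^ 2 = (q + p) ^ 2 := by ring
    nlinarith
  · -- value at the optimum
    have e1 : (1 - r) ^ 2 / μ = 4 / (p + q) ^ 2 := by
      rw [hrdef, ← hp2]
      field_simp
      ring
    have e2 : 4 / (p + q) ^ 2 = (1 + r) ^ 2 / L := by
      rw [hrdef, ← hq2]
      field_simp
      ring
    rw [heavyBallRate, Real.sqrt_sq hr0.le, if_pos ⟨e1.le, e2.le⟩]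
  · -- optimality
    rintro β ⟨hβ0, hβ1⟩ γ ⟨hγ0, hγ2⟩
    rw [heavyBallRate]
    split_ifs with hif hif2
    · -- branch 1 : r ≤ √β
      have hs0 : 0 ≤ Real.sqrt β := Real.sqrt_nonneg β
      have hs1 : Real.sqrt β < 1 := by
        rw [show (1:ℝ) = Real.sqrt 1 by simp]
        exact Real.sqrt_lt_sqrt hβ0.le hβ1
      have hcross : (1 - Real.sqrt β) ^ 2 / μ ≤ (1 + Real.sqrt β) ^ 2 / L :=
        hif.1.trans hif.2
      have h : q ^ 2 * (1 - Real.sqrt β) ^ 2 ≤ p ^ 2 * (1 + Real.sqrt β) ^ 2 := by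
        rw [hp2, hq2]
        rw [div_le_div_iff₀ hμ hL] at hcross
        linarith
      exact hb_branch1 p q (Real.sqrt β) hp hpq hs0 hs1 h
    · -- branch 2
      apply hb_key_aux p q β hp hpq hβ0 hβ1
      rw [hp2, hq2]
      have hγ' : γ * (L + μ) ≤ 2 * (1 + β) := (le_div_iff₀ (by linarith)).mp hif2
      rw [div_le_div_iff₀ (by positivity) two_pos]
      nlinarith [mul_le_mul_of_nonneg_left hγ' hμ.le]
    · -- branch 3
      apply hb_key_aux p q β hp hpq hβ0 hβ1
      rw [hp2, hq2]
      push_neg at hif2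
      have hγ' : 2 * (1 + β) < γ * (L + μ) := (div_lt_iff₀ (by linarith)).mp hif2
      rw [div_le_div_iff₀ (by positivity) two_pos]
      nlinarith [mul_le_mul_of_nonneg_left hγ'.le hL.le]
end

section
/- Let f : ℝ^d → ℝ be twice continuously differentiable, L-smooth, and satisfy the PL inequality with constant μ > 0, and let (x_t, v_t)_{t ≥ 0} solve the heavy ball ODE with friction parameter α > 0 and arbitrary initial condition (x_0, v_0) ∈ ℝ^d × ℝ^d. Then lim_{t→∞} v_t = 0 and there exists x_∞ ∈ M (depending on x_0, v_0) such that lim_{t→∞} x_t = x_∞. -/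
/-!
Along the flow, the Lyapunov function
`V = (2 + c α) (f x - f*) + ‖v‖² / 2 + ‖v + c ∇f(x)‖² / 2`
has derivative at most `-(α ‖v‖² + c ‖∇f(x)‖² / 2)` as soon as `c` is small compared with `α` and
the Lipschitz constant of `∇f`, which bounds the Hessian. The PL inequality bounds `V` by a multiple
of `‖v‖² + ‖∇f(x)‖²`, so `V` decays exponentially. Then `‖v_t‖ ≤ √(2 V)` decays exponentially, so
`v` is integrable on `[0, ∞)` and `x_t` converges; and `f(x_t) - f* ≤ V / (2 + c α) → 0` makes the
limit a minimizer.
-/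

open Filter Topology Real MeasureTheory Set InnerProductSpace
open scoped NNReal RealInnerProductSpace

variable {E : Type*} [NormedAddCommGroup E] [InnerProductSpace ℝ E]

theorem le_mul_exp_of_hasDerivAt_le_mul {V V' : ℝ → ℝ} {k : ℝ}
    (hV : ∀ t, HasDerivAt V (V' t) t) (hle : ∀ t, V' t ≤ k * V t) {s t : ℝ} (hst : s ≤ t) :
    V t ≤ V s * exp (k * (t - s)) := by
  have := le_gronwallBound_of_liminf_deriv_right_le (ε := 0)
    (fun u _ => (hV u).continuousAt.continuousWithinAt)
    (fun u _ r hr => (hV u).hasDerivWithinAt.liminf_right_slope_le hr) le_rfl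
    (fun u _ => by simpa using hle u) t ⟨hst, le_rfl⟩
  rwa [gronwallBound_ε0] at this

theorem exists_tendsto_of_hasDerivAt_of_norm_le_exp {F : Type*} [NormedAddCommGroup F]
    [NormedSpace ℝ F] [CompleteSpace F] {x v : ℝ → F} {C k : ℝ} (hk : 0 < k)
    (hx : ∀ t, HasDerivAt x (v t) t) (hv : ∀ t ≥ 0, ‖v t‖ ≤ C * exp (-k * t)) :
    ∃ l, Tendsto x atTop (𝓝 l) := by
  have hmeas : StronglyMeasurable v :=
    funext (fun t => (hx t).deriv) ▸ stronglyMeasurable_deriv x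
  have hint : IntegrableOn v (Ioi 0) :=
    ((exp_neg_integrableOn_Ioi 0 hk).const_mul C).mono' hmeas.aestronglyMeasurable
      ((ae_restrict_iff' measurableSet_Ioi).2 (ae_of_all _ fun t ht => hv t (le_of_lt ht)))
  exact ⟨_, tendsto_limUnder_of_hasDerivAt_of_integrableOn_Ioi (fun t _ => hx t) hint⟩

theorem tendsto_mul_exp_neg_mul_atTop {k : ℝ} (hk : 0 < k) (C : ℝ) :
    Tendsto (fun t => C * exp (-k * t)) atTop (𝓝 0) := by
  simpa using (tendsto_exp_atBot.comp
    (tendsto_id.const_mul_atTop_of_neg (neg_neg_iff_pos.2 hk))).const_mul C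

theorem ContDiff.differentiable_gradient [CompleteSpace E] {f : E → ℝ} (hf : ContDiff ℝ 2 f) :
    Differentiable ℝ (gradient f) :=
  (toDual ℝ E).symm.toContinuousLinearEquiv.differentiable.comp
    ((hf.fderiv_right (m := 1) (by norm_num)).differentiable one_ne_zero)

theorem heavyBall_dissipation_le {v g w : E} {α c L : ℝ} (hc : 0 < c) (hL : 0 ≤ L)
    (hw : ‖w‖ ≤ L * ‖v‖) (hcα : 3 * c * L ≤ 2 * α) (hcL : c ^ 2 * L ≤ 1) :
    -(2 * α) * ‖v‖ ^ 2 - c * ‖g‖ ^ 2 + c * ⟪v + c • g, w⟫ ≤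
      -(α * ‖v‖ ^ 2 + c / 2 * ‖g‖ ^ 2) := by
  have hvw : ⟪v, w⟫ ≤ L * ‖v‖ ^ 2 := by
    nlinarith [real_inner_le_norm v w, norm_nonneg v]
  have hgw : ⟪g, w⟫ ≤ L * ‖v‖ * ‖g‖ := by
    nlinarith [real_inner_le_norm g w, norm_nonneg g]
  have young : c * L * ‖v‖ * (c * ‖g‖) ≤ c * L / 2 * (‖v‖ ^ 2 + c ^ 2 * ‖g‖ ^ 2) := by
    nlinarith [sq_nonneg (‖v‖ - c * ‖g‖), mul_nonneg hc.le hL]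
  rw [inner_add_left, real_inner_smul_left]
  nlinarith [mul_nonneg hc.le (sq_nonneg ‖g‖), sq_nonneg ‖v‖]

section HeavyBall

variable [CompleteSpace E] {f : E → ℝ} {fstar α c μ : ℝ}

/-- The coefficient `2 + c α` makes the cross terms `⟪∇f x, v⟫` cancel in the time derivative. -/
noncomputable def heavyBallLyapunov (f : E → ℝ) (fstar α c : ℝ) (x v : E) : ℝ :=
  (2 + c * α) * (f x - fstar) + ‖v‖ ^ 2 / 2 + ‖v + c • gradient f x‖ ^ 2 / 2

theorem sq_norm_le_two_mul_heavyBallLyapunov (hmin : ∀ y, fstar ≤ f y) (hc : 0 ≤ c)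
    (hα : 0 ≤ α) (x v : E) : ‖v‖ ^ 2 ≤ 2 * heavyBallLyapunov f fstar α c x v := by
  have := sub_nonneg.2 (hmin x)
  unfold heavyBallLyapunov
  nlinarith [sq_nonneg ‖v + c • gradient f x‖, mul_nonneg (mul_nonneg hc hα) this]

theorem mul_sub_le_heavyBallLyapunov (x v : E) :
    (2 + c * α) * (f x - fstar) ≤ heavyBallLyapunov f fstar α c x v := by
  unfold heavyBallLyapunov
  nlinarith [sq_nonneg ‖v + c • gradient f x‖, sq_nonneg ‖v‖]

theorem heavyBallLyapunov_le (x v : E) :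
    heavyBallLyapunov f fstar α c x v ≤
      (2 + c * α) * (f x - fstar) + 3 / 2 * ‖v‖ ^ 2 + c ^ 2 * ‖gradient f x‖ ^ 2 := by
  have h := parallelogram_law_with_norm ℝ v (c • gradient f x)
  rw [norm_smul, mul_pow, Real.norm_eq_abs, sq_abs] at h
  unfold heavyBallLyapunov
  nlinarith [sq_nonneg ‖v - c • gradient f x‖]

theorem mul_heavyBallLyapunov_le {κ : ℝ} (hμ : 0 < μ) (hα : 0 ≤ α) (hc : 0 ≤ c)
    (hκα : 3 * κ ≤ 2 * α) (hκc : κ * (2 + c * α + 2 * c ^ 2 * μ) ≤ c * μ) (hκ : 0 ≤ κ) {x : E}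
    (hPL : 2 * μ * (f x - fstar) ≤ ‖gradient f x‖ ^ 2) (v : E) :
    κ * heavyBallLyapunov f fstar α c x v ≤ α * ‖v‖ ^ 2 + c / 2 * ‖gradient f x‖ ^ 2 := by
  have hV : κ * heavyBallLyapunov f fstar α c x v ≤ κ * ((2 + c * α) * (f x - fstar) +
      3 / 2 * ‖v‖ ^ 2 + c ^ 2 * ‖gradient f x‖ ^ 2) :=
    mul_le_mul_of_nonneg_left (heavyBallLyapunov_le x v) hκ
  have hA : 0 ≤ κ * (2 + c * α) := mul_nonneg hκ (by positivity)
  have h1 : (κ * (2 + c * α) * (f x - fstar) + κ * c ^ 2 * ‖gradient f x‖ ^ 2) * (2 * μ) ≤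
      c / 2 * ‖gradient f x‖ ^ 2 * (2 * μ) := by
    nlinarith [mul_le_mul_of_nonneg_left hPL hA,
      mul_le_mul_of_nonneg_right hκc (sq_nonneg ‖gradient f x‖)]
  have h2 := le_of_mul_le_mul_right h1 (by positivity)
  nlinarith [sq_nonneg ‖v‖]

variable {x v : ℝ → E}

theorem hasDerivAt_heavyBallLyapunov (hf : ContDiff ℝ 2 f) (hx : ∀ t, HasDerivAt x (v t) t)
    (hv : ∀ t, HasDerivAt v (-(α • v t) - gradient f (x t)) t) (t : ℝ) :
    HasDerivAt (fun s => heavyBallLyapunov f fstar α c (x s) (v s))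
      (-(2 * α) * ‖v t‖ ^ 2 - c * ‖gradient f (x t)‖ ^ 2 +
        c * ⟪v t + c • gradient f (x t), fderiv ℝ (gradient f) (x t) (v t)⟫) t := by
  have hfx : HasDerivAt (fun s => f (x s)) ⟪gradient f (x t), v t⟫ t :=
    ((hf.differentiable two_ne_zero (x t)).hasFDerivAt.comp_hasDerivAt t (hx t)).congr_deriv
      (toDual_symm_apply ..).symm
  have hgx : HasDerivAt (fun s => gradient f (x s)) (fderiv ℝ (gradient f) (x t) (v t)) t :=
    (hf.differentiable_gradient (x t)).hasFDerivAt.comp_hasDerivAt t (hx t)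
  refine ((((hfx.sub_const fstar).const_mul (2 + c * α)).add ((hv t).norm_sq.div_const 2)).add
    (((hv t).add (hgx.const_smul c)).norm_sq.div_const 2)).congr_deriv ?_
  simp only [Pi.add_apply, Pi.smul_apply, inner_add_left, inner_add_right, inner_sub_right,
    inner_neg_right, real_inner_smul_left, real_inner_smul_right, real_inner_self_eq_norm_sq,
    real_inner_comm (v t)]
  ring

theorem exists_heavyBallLyapunov_le_exp {K : ℝ≥0} (hμ : 0 < μ) (hα : 0 < α)
    (hf : ContDiff ℝ 2 f) (hPL : ∀ y, 2 * μ * (f y - fstar) ≤ ‖gradient f y‖ ^ 2)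
    (hLip : LipschitzWith K (gradient f)) (hx : ∀ t, HasDerivAt x (v t) t)
    (hv : ∀ t, HasDerivAt v (-(α • v t) - gradient f (x t)) t) :
    ∃ c > 0, ∃ κ > 0, ∀ t ≥ 0, heavyBallLyapunov f fstar α c (x t) (v t) ≤
      heavyBallLyapunov f fstar α c (x 0) (v 0) * exp (-κ * t) := by
  obtain ⟨c, hc, hcα, hcK⟩ : ∃ c : ℝ, 0 < c ∧ 3 * c * K ≤ 2 * α ∧ c ^ 2 * K ≤ 1 := by
    have hm : 0 < min α 1 := lt_min hα one_pos
    have hK : (0 : ℝ) ≤ K := K.coe_nonneg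
    have hc : 0 < min α 1 / (2 * K + 2) := by positivity
    have hcK : min α 1 / (2 * K + 2) * (2 * K + 2) = min α 1 := div_mul_cancel₀ _ (by positivity)
    refine ⟨_, hc, ?_, ?_⟩ <;> nlinarith [min_le_left α 1, min_le_right α 1]
  set A := 2 + c * α + 2 * c ^ 2 * μ
  have hA : 0 < A := by positivity
  set κ := min (2 * α / 3) (c * μ / A)
  have hκα : 3 * κ ≤ 2 * α := by linarith [min_le_left (2 * α / 3) (c * μ / A)]
  have hκc : κ * A ≤ c * μ := (le_div_iff₀ hA).1 (min_le_right _ _)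
  have hκ : 0 < κ := lt_min (by positivity) (by positivity)
  have hHess : ∀ s, ‖fderiv ℝ (gradient f) (x s) (v s)‖ ≤ K * ‖v s‖ := fun s =>
    ((fderiv ℝ (gradient f) (x s)).le_opNorm _).trans
      (mul_le_mul_of_nonneg_right (norm_fderiv_le_of_lipschitz ℝ hLip) (norm_nonneg _))
  refine ⟨c, hc, κ, hκ, fun t ht => ?_⟩
  simpa using le_mul_exp_of_hasDerivAt_le_mul (k := -κ) (hasDerivAt_heavyBallLyapunov hf hx hv)
    (fun s => by
      linarith [heavyBall_dissipation_le (g := gradient f (x s)) hc K.coe_nonneg (hHess s) hcα hcK,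
        mul_heavyBallLyapunov_le hμ hα.le hc.le hκα hκc hκ.le (hPL (x s)) (v s)]) ht

theorem heavyBall_tendsto_of_pl {K : ℝ≥0} (hμ : 0 < μ) (hα : 0 < α) (hf : ContDiff ℝ 2 f)
    (hmin : ∀ y, fstar ≤ f y) (hPL : ∀ y, 2 * μ * (f y - fstar) ≤ ‖gradient f y‖ ^ 2)
    (hLip : LipschitzWith K (gradient f)) (hx : ∀ t, HasDerivAt x (v t) t)
    (hv : ∀ t, HasDerivAt v (-(α • v t) - gradient f (x t)) t) :
    Tendsto v atTop (𝓝 0) ∧ ∃ xinf, f xinf = fstar ∧ Tendsto x atTop (𝓝 xinf) := by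
  obtain ⟨c, hc, κ, hκ, hdecay⟩ := exists_heavyBallLyapunov_le_exp hμ hα hf hPL hLip hx hv
  set V := fun t => heavyBallLyapunov f fstar α c (x t) (v t)
  have hV : Tendsto V atTop (𝓝 0) := by
    refine squeeze_zero' (Eventually.of_forall fun t => ?_)
      ((eventually_ge_atTop 0).mono hdecay) (tendsto_mul_exp_neg_mul_atTop hκ _)
    nlinarith [sq_norm_le_two_mul_heavyBallLyapunov hmin hc.le hα.le (x t) (v t), sq_nonneg ‖v t‖]
  have hvexp : ∀ t ≥ 0, ‖v t‖ ≤ √(2 * V 0) * exp (-(κ / 2) * t) := fun t ht =>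
    calc ‖v t‖ = √(‖v t‖ ^ 2) := (sqrt_sq (norm_nonneg _)).symm
      _ ≤ √(2 * V 0 * exp (-κ * t)) := sqrt_le_sqrt (by
          linarith [sq_norm_le_two_mul_heavyBallLyapunov hmin hc.le hα.le (x t) (v t), hdecay t ht])
      _ = √(2 * V 0) * exp (-(κ / 2) * t) := by
          rw [sqrt_mul' _ (exp_pos _).le, ← exp_half]; ring_nf
  obtain ⟨xinf, hxinf⟩ := exists_tendsto_of_hasDerivAt_of_norm_le_exp (half_pos hκ) hx hvexp
  have hgap : Tendsto (fun t => f (x t) - fstar) atTop (𝓝 0) :=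
    squeeze_zero (fun t => sub_nonneg.2 (hmin _))
      (fun t => (le_div_iff₀' (by positivity)).2
        (mul_sub_le_heavyBallLyapunov (α := α) (c := c) (x t) (v t)))
      (by simpa using hV.div_const (2 + c * α))
  refine ⟨squeeze_zero_norm' ((eventually_ge_atTop 0).mono hvexp)
    (tendsto_mul_exp_neg_mul_atTop (half_pos hκ) _), xinf, ?_, hxinf⟩
  exact tendsto_nhds_unique ((hf.continuous.tendsto xinf).comp hxinf)
    (by simpa [Function.comp_def] using hgap.add_const fstar)

end HeavyBall

theorem heavy_ball_ode_converges_general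
    (d : ℕ) (f : EuclideanSpace ℝ (Fin d) → ℝ) (μ L : ℝ) (hμ : 0 < μ)
    (hC2 : ContDiff ℝ 2 f)
    (xstar : EuclideanSpace ℝ (Fin d)) (hstar : ∀ y, f xstar ≤ f y)
    (hPL : ∀ x, 2 * μ * (f x - f xstar) ≤ ‖gradient f x‖ ^ 2)
    (hLip : ∀ x y, ‖gradient f x - gradient f y‖ ≤ L * ‖x - y‖)
    (α : ℝ) (hα : 0 < α)
    (x v : ℝ → EuclideanSpace ℝ (Fin d))
    (hx : ∀ t : ℝ, HasDerivAt x (v t) t)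
    (hv : ∀ t : ℝ, HasDerivAt v (-(α • v t) - gradient f (x t)) t) :
    Tendsto v atTop (𝓝 0) ∧
      ∃ xinf : EuclideanSpace ℝ (Fin d), (∀ y, f xinf ≤ f y) ∧ Tendsto x atTop (𝓝 xinf) := by
  have hLip' : LipschitzWith L.toNNReal (gradient f) := LipschitzWith.of_dist_le_mul fun y z => by
    simpa only [dist_eq_norm] using (hLip y z).trans
      (mul_le_mul_of_nonneg_right (le_coe_toNNReal L) (norm_nonneg _))
  obtain ⟨hv0, xinf, hxinf_eq, hxinf⟩ := heavyBall_tendsto_of_pl hμ hα hC2 hstar hPL hLip' hx hv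
  exact ⟨hv0, xinf, fun y => hxinf_eq ▸ hstar y, hxinf⟩

/-- **Convergence of the heavy ball ODE (Proposition 3.1).**
If `f : ℝ^d → ℝ` is `C²`, `L`-smooth, and satisfies the PL inequality with constant `μ > 0`
(with the minimum attained at `xstar`), and `(x, v)` solves the heavy ball ODE
`ẋ = v`, `v̇ = -α v - ∇f(x)` with friction `α > 0` and arbitrary initial condition, then
`v_t → 0` and there exists a global minimizer `x_∞` with `x_t → x_∞`. -/
theorem heavy_ball_ode_converges
    (d : ℕ) (f : EuclideanSpace ℝ (Fin d) → ℝ) (μ L : ℝ) (hμ : 0 < μ) (hL : 0 < L)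
    (hC2 : ContDiff ℝ 2 f)
    (xstar : EuclideanSpace ℝ (Fin d)) (hstar : ∀ y, f xstar ≤ f y)
    (hPL : ∀ x, 2 * μ * (f x - f xstar) ≤ ‖gradient f x‖ ^ 2)
    (hLip : ∀ x y, ‖gradient f x - gradient f y‖ ≤ L * ‖x - y‖)
    (α : ℝ) (hα : 0 < α)
    (x v : ℝ → EuclideanSpace ℝ (Fin d))
    (hx : ∀ t : ℝ, HasDerivAt x (v t) t)
    (hv : ∀ t : ℝ, HasDerivAt v (-(α • v t) - gradient f (x t)) t) :
    Tendsto v atTop (𝓝 0) ∧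
      ∃ xinf : EuclideanSpace ℝ (Fin d), (∀ y, f xinf ≤ f y) ∧ Tendsto x atTop (𝓝 xinf) :=
  heavy_ball_ode_converges_general d f μ L hμ hC2 xstar hstar hPL hLip α hα x v hx hv
end

section
/- Let μ > 0, α > 0, d_N, d_T ∈ ℕ, and let H ∈ ℝ^{d_N × d_N} be a symmetric matrix with ⟨v, Hv⟩ ≥ μ‖v‖² for all v ∈ ℝ^{d_N}. Define the block matrix A ∈ ℝ^{(d_N + d_T + d_N) × (d_N + d_T + d_N)} by A = [[0, 0, Id_{d_N}], [0, −α Id_{d_T}, 0], [−H, 0, −α Id_{d_N}]]. Then every complex eigenvalue ρ of A satisfies Re(ρ) ≤ −m(α), where m(α) = (1/2)(α − √(max(0, α² − 4μ))). -/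
/-!
An eigenvector `(x, t, v)` of `A` for `ρ` satisfies `v = ρ x`, `-α t = ρ t` and
`-H x - α v = ρ v`. Either `x = 0`, which forces `ρ = -α`, or `x` is an eigenvector of `H` with
eigenvalue `-(ρ² + α ρ)`. As `H - μ` is positive semidefinite, so is its complexification, hence
`-(ρ² + α ρ)` is real and at least `μ`. Solving the quadratic, either `ρ` is not real and
`Re ρ = -α / 2`, or `ρ` is real and `(2ρ + α)² ≤ α² - 4μ`.
-/

open RealInnerProductSpace Matrix
open scoped MatrixOrder ComplexOrder

section Spectrum

variable {n : Type*}

theorem Matrix.mem_spectrum_iff_exists_mulVec_eq_smul [Fintype n] [DecidableEq n] {K : Type*}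
    [Field K] {A : Matrix n n K} {c : K} : c ∈ spectrum K A ↔ ∃ x ≠ 0, A *ᵥ x = c • x := by
  simp only [← spectrum_toLin', ← Module.End.hasEigenvalue_iff_mem_spectrum,
    Module.End.hasEigenvalue_iff, Submodule.ne_bot_iff, Module.End.mem_eigenspace_iff,
    toLin'_apply]
  exact exists_congr fun _ => and_comm

theorem Matrix.PosSemidef.nonneg_of_mulVec_eq_smul [Fintype n] {𝕜 : Type*} [RCLike 𝕜]
    {A : Matrix n n 𝕜} (hA : A.PosSemidef) {x : n → 𝕜} {c : 𝕜} (hx : x ≠ 0)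
    (h : A *ᵥ x = c • x) : 0 ≤ c := by
  have hpos : 0 < star x ⬝ᵥ x := dotProduct_star_self_pos_iff.mpr hx
  have hquad : 0 ≤ c * (star x ⬝ᵥ x) := by
    simpa [h, dotProduct_smul, mul_comm] using hA.dotProduct_mulVec_nonneg x
  simpa [hpos.ne'] using mul_nonneg hquad (RCLike.inv_pos_of_pos hpos).le

theorem Matrix.PosSemidef.map_ofReal [Fintype n] [DecidableEq n] {M : Matrix n n ℝ}
    (hM : M.PosSemidef) :
    (M.map Complex.ofReal).PosSemidef := by
  obtain ⟨X, rfl⟩ := CStarAlgebra.nonneg_iff_eq_star_mul_self.mp hM.nonneg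
  convert posSemidef_conjTranspose_mul_self (X.map Complex.ofReal)
  change (star X * X).map Complex.ofRealHom = _
  rw [Matrix.map_mul, star_eq_conjTranspose, conjTranspose_map]
  · rfl
  · intro r
    simp

theorem Matrix.posSemidef_sub_smul_one_of_le_inner [Fintype n] [DecidableEq n]
    {H : Matrix n n ℝ} (hH : H.IsSymm) {μ : ℝ}
    (hHpos : ∀ v : EuclideanSpace ℝ n, μ * ‖v‖ ^ 2 ≤ ⟪v, toEuclideanLin H v⟫) :
    (H - μ • 1).PosSemidef := by
  refine .of_dotProduct_mulVec_nonneg (hH.sub (isSymm_one.smul μ)) fun x => ?_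
  have hx := hHpos (WithLp.toLp 2 x)
  rw [← real_inner_self_eq_norm_sq, EuclideanSpace.inner_eq_star_dotProduct,
    EuclideanSpace.inner_eq_star_dotProduct] at hx
  simpa [sub_mulVec, smul_mulVec, dotProduct_comm x] using hx

theorem Matrix.map_ofReal_sub_smul_one [DecidableEq n] (H : Matrix n n ℝ) (μ : ℝ) :
    (H - μ • 1).map Complex.ofReal = H.map Complex.ofReal - (μ : ℂ) • 1 := by
  ext i j
  by_cases h : i = j <;> simp [h]

theorem ofReal_le_of_mem_spectrum_map_ofReal [Fintype n] [DecidableEq n]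
    {H : Matrix n n ℝ} (hH : H.IsSymm) {μ : ℝ}
    (hHpos : ∀ v : EuclideanSpace ℝ n, μ * ‖v‖ ^ 2 ≤ ⟪v, toEuclideanLin H v⟫) {c : ℂ}
    (hc : c ∈ spectrum ℂ (H.map Complex.ofReal)) : (μ : ℂ) ≤ c := by
  obtain ⟨x, hx, hHx⟩ := mem_spectrum_iff_exists_mulVec_eq_smul.mp hc
  rw [← sub_nonneg]
  refine (posSemidef_sub_smul_one_of_le_inner hH hHpos).map_ofReal.nonneg_of_mulVec_eq_smul hx ?_
  rw [map_ofReal_sub_smul_one, sub_mulVec, smul_mulVec, one_mulVec, hHx, sub_smul]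

end Spectrum

theorem re_le_of_ofReal_le_neg_sq_add_mul {α μ : ℝ} {ρ : ℂ} (h : (μ : ℂ) ≤ -(ρ ^ 2 + α * ρ)) :
    ρ.re ≤ -((α - Real.sqrt (max 0 (α ^ 2 - 4 * μ))) / 2) := by
  have hs : 0 ≤ Real.sqrt (max 0 (α ^ 2 - 4 * μ)) := Real.sqrt_nonneg _
  obtain ⟨hre, him⟩ := Complex.le_def.mp h
  simp only [Complex.ofReal_re, Complex.ofReal_im, Complex.neg_re, Complex.neg_im, Complex.add_re,
    Complex.add_im, Complex.mul_re, Complex.mul_im, pow_two] at hre him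
  rcases mul_eq_zero.mp (show ρ.im * (2 * ρ.re + α) = 0 by linarith) with hreal | hcenter
  · have hsq : (2 * ρ.re + α) ^ 2 ≤ max 0 (α ^ 2 - 4 * μ) := by
      rw [hreal] at hre
      nlinarith [le_max_right 0 (α ^ 2 - 4 * μ)]
    linarith [le_abs_self (2 * ρ.re + α), Real.abs_le_sqrt hsq]
  · linarith

section HeavyBall

variable {R : Type*} [CommRing R] {n m : Type*} [DecidableEq n] [DecidableEq m]

def heavyBallMatrix (a : R) (H : Matrix n n R) : Matrix ((n ⊕ m) ⊕ n) ((n ⊕ m) ⊕ n) R :=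
  fromBlocks (fromBlocks 0 0 0 (-(a • 1))) (fromRows 1 0) (fromCols (-H) 0) (-(a • 1))

theorem heavyBallMatrix_map {S : Type*} [CommRing S] (f : R →+* S) (a : R) (H : Matrix n n R) :
    (heavyBallMatrix (m := m) a H).map f = heavyBallMatrix (f a) (H.map f) := by
  ext ((i | i) | i) ((j | j) | j) <;> simp [heavyBallMatrix, one_apply, apply_ite f]

variable [Fintype n] [Fintype m]

theorem heavyBallMatrix_mulVec_sumElim (a : R) (H : Matrix n n R) (x : n → R) (t : m → R)
    (v : n → R) :
    heavyBallMatrix a H *ᵥ Sum.elim (Sum.elim x t) v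
      = Sum.elim (Sum.elim v (-a • t)) (-(H *ᵥ x) - a • v) := by
  simp [heavyBallMatrix, fromBlocks_mulVec, ← Sum.elim_add_add, neg_mulVec, smul_mulVec,
    sub_eq_add_neg]

theorem eq_neg_or_mem_spectrum_of_mem_spectrum_heavyBallMatrix {K : Type*} [Field K] {a ρ : K}
    {H : Matrix n n K} (hρ : ρ ∈ spectrum K (heavyBallMatrix (m := m) a H)) :
    ρ = -a ∨ -(ρ ^ 2 + a * ρ) ∈ spectrum K H := by
  obtain ⟨w, hw0, hw⟩ := mem_spectrum_iff_exists_mulVec_eq_smul.mp hρ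
  obtain ⟨x, t, v, rfl⟩ : ∃ x t v, w = Sum.elim (Sum.elim x t) v :=
    ⟨w ∘ Sum.inl ∘ Sum.inl, w ∘ Sum.inl ∘ Sum.inr, w ∘ Sum.inr, by ext ((_ | _) | _) <;> rfl⟩
  rw [heavyBallMatrix_mulVec_sumElim] at hw
  have hv : v = ρ • x := funext fun i => congrFun hw (.inl (.inl i))
  have ht : -a • t = ρ • t := funext fun j => congrFun hw (.inl (.inr j))
  have hHx : -(H *ᵥ x) - a • v = ρ • v := funext fun i => congrFun hw (.inr i)
  by_cases hx : x = 0
  · left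
    have ht0 : t ≠ 0 := by
      rintro rfl
      exact hw0 (by simp [hx, hv])
    have hρt : (ρ + a) • t = 0 := by
      rw [add_smul, ← ht]
      simp
    exact eq_neg_of_add_eq_zero_left ((smul_eq_zero.mp hρt).resolve_right ht0)
  · right
    refine mem_spectrum_iff_exists_mulVec_eq_smul.mpr ⟨x, hx, ?_⟩
    rw [hv] at hHx
    linear_combination (norm := module) -hHx

end HeavyBall

theorem heavy_ball_ode_linearization_spectrum_general
    (μ α : ℝ) (hα : 0 < α) (dN dT : ℕ)
    (H : Matrix (Fin dN) (Fin dN) ℝ) (hH : H.IsSymm)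
    (hHpos : ∀ v : EuclideanSpace ℝ (Fin dN), μ * ‖v‖ ^ 2 ≤ ⟪v, Matrix.toEuclideanLin H v⟫) :
    ∀ ρ ∈ spectrum ℂ
      ((Matrix.fromBlocks
          (Matrix.fromBlocks (0 : Matrix (Fin dN) (Fin dN) ℝ) (0 : Matrix (Fin dN) (Fin dT) ℝ)
            (0 : Matrix (Fin dT) (Fin dN) ℝ) (-(α • (1 : Matrix (Fin dT) (Fin dT) ℝ))))
          (Matrix.fromRows (1 : Matrix (Fin dN) (Fin dN) ℝ) (0 : Matrix (Fin dT) (Fin dN) ℝ))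
          (Matrix.fromCols (-H) (0 : Matrix (Fin dN) (Fin dT) ℝ))
          (-(α • (1 : Matrix (Fin dN) (Fin dN) ℝ)))).map Complex.ofReal),
      ρ.re ≤ -((α - Real.sqrt (max 0 (α ^ 2 - 4 * μ))) / 2) := by
  intro ρ hρ
  have hρ' : ρ ∈ spectrum ℂ (heavyBallMatrix (m := Fin dT) (α : ℂ) (H.map Complex.ofReal)) := by
    convert hρ using 2
    exact (heavyBallMatrix_map Complex.ofRealHom α H).symm
  rcases eq_neg_or_mem_spectrum_of_mem_spectrum_heavyBallMatrix hρ' with rfl | hc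
  · have hs : 0 ≤ Real.sqrt (max 0 (α ^ 2 - 4 * μ)) := Real.sqrt_nonneg _
    simp only [Complex.neg_re, Complex.ofReal_re]
    linarith
  · exact re_le_of_ofReal_le_neg_sq_add_mul (ofReal_le_of_mem_spectrum_map_ofReal hH hHpos hc)

/-- **Spectrum of the linearized heavy ball ODE system (continuous time).**
Let `μ, α > 0` and let `H` be a symmetric `dN × dN` matrix with `⟪v, Hv⟫ ≥ μ‖v‖²` for all
`v`. Then every complex eigenvalue `ρ` of the block matrix
`A = [[0, 0, Id], [0, -α Id, 0], [-H, 0, -α Id]]` (blocks of sizes `dN`, `dT`, `dN`)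
satisfies `Re ρ ≤ -m(α)` where `m(α) = (α - √(max 0 (α² - 4μ)))/2`. -/
theorem heavy_ball_ode_linearization_spectrum
    (μ α : ℝ) (hμ : 0 < μ) (hα : 0 < α) (dN dT : ℕ)
    (H : Matrix (Fin dN) (Fin dN) ℝ) (hH : H.IsSymm)
    (hHpos : ∀ v : EuclideanSpace ℝ (Fin dN), μ * ‖v‖ ^ 2 ≤ ⟪v, Matrix.toEuclideanLin H v⟫) :
    ∀ ρ ∈ spectrum ℂ
      ((Matrix.fromBlocks
          (Matrix.fromBlocks (0 : Matrix (Fin dN) (Fin dN) ℝ) (0 : Matrix (Fin dN) (Fin dT) ℝ)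
            (0 : Matrix (Fin dT) (Fin dN) ℝ) (-(α • (1 : Matrix (Fin dT) (Fin dT) ℝ))))
          (Matrix.fromRows (1 : Matrix (Fin dN) (Fin dN) ℝ) (0 : Matrix (Fin dT) (Fin dN) ℝ))
          (Matrix.fromCols (-H) (0 : Matrix (Fin dN) (Fin dT) ℝ))
          (-(α • (1 : Matrix (Fin dN) (Fin dN) ℝ)))).map Complex.ofReal),
      ρ.re ≤ -((α - Real.sqrt (max 0 (α ^ 2 - 4 * μ))) / 2) :=
  heavy_ball_ode_linearization_spectrum_general μ α hα dN dT H hH hHpos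
end

section
/- Let A ∈ ℝ^{m × m} and let η ∈ ℝ satisfy η > Re(ρ) for every complex eigenvalue ρ of A. Then there exists a constant C ≥ 0 with ‖e^{tA}‖ ≤ C e^{ηt} for all t ≥ 0, and such that for every δ > 0, every t₀ ∈ ℝ, every continuous ξ : [t₀, ∞) → ℝ^m, and every differentiable y : [t₀, ∞) → ℝ^m with y'(t) = A y(t) + ξ(t) and ‖ξ(t)‖ ≤ δ‖y(t)‖ for all t ≥ t₀, one has ‖y(t)‖ ≤ C ‖y(t₀)‖ e^{(η + Cδ)(t − t₀)} for all t ≥ t₀. -/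
/-!
Complexify `A` to an operator `L`. Every eigenvalue of `exp L` is `exp c` for an eigenvalue `c`
of `L`: since `L` commutes with `exp L`, it has an eigenvector inside each eigenspace of `exp L`.
Hence the spectral radius of `exp L` is below `e^η`, and Gelfand's formula gives
`‖(exp L)ⁿ‖ ≤ K e^{ηn}`; writing `t = n + s` with `s ∈ [0, 1]` yields `‖e^{tL}‖ ≤ C e^{ηt}`, and the
real operator `e^{tA}` has norm at most that of its complexification.

For the perturbed equation, variation of constants gives
`e^{-η(t-t₀)} ‖y t‖ ≤ C ‖y t₀‖ + C δ ∫_{t₀}^t e^{-η(s-t₀)} ‖y s‖ ds`,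
and the integral form of Grönwall's inequality turns this into the claimed bound.
-/

open Set Filter NormedSpace Module MeasureTheory

section Spectrum

variable {E : Type*} [NormedAddCommGroup E]

theorem ContinuousLinearMap.exp_apply_of_apply_eq_smul {𝕂 : Type*} [RCLike 𝕂] [NormedSpace 𝕂 E]
    [CompleteSpace E] {L : E →L[𝕂] E} {w : E} {c : 𝕂} (hw : L w = c • w) :
    exp L w = exp c • w := by
  have hpow : ∀ n : ℕ, (L ^ n) w = c ^ n • w := by
    intro n
    induction n with
    | zero => simp
    | succ n ih => simp [pow_succ, ih, hw, smul_smul, mul_comm]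
  have hL := (exp_series_hasSum_exp' (𝕂 := 𝕂) L).mapL (apply 𝕂 E w)
  have hc := (exp_series_hasSum_exp' (𝕂 := 𝕂) c).smul_const w
  simp only [apply_apply, smul_apply, hpow, smul_smul, smul_eq_mul] at hL hc
  exact hL.unique hc

variable [NormedSpace ℂ E] [FiniteDimensional ℂ E]

theorem ContinuousLinearMap.exists_exp_eq_of_mem_spectrum_exp (L : E →L[ℂ] E) {μ : ℂ}
    (hμ : μ ∈ spectrum ℂ (exp L)) : ∃ c ∈ spectrum ℂ L, Complex.exp c = μ := by
  have : CompleteSpace E := FiniteDimensional.complete ℂ E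
  rw [spectrum_eq, ← End.hasEigenvalue_iff_mem_spectrum] at hμ
  set W := End.eigenspace ((exp L : E →L[ℂ] E) : End ℂ E) μ
  have hLW : ∀ x ∈ W, L x ∈ W :=
    End.mapsTo_genEigenspace_of_comm
      (((Commute.refl L).exp_right).symm.map toLinearMapRingHom) μ 1
  have : Nontrivial W := Submodule.nontrivial_iff_ne_bot.mpr hμ
  obtain ⟨c, hc⟩ := End.exists_eigenvalue ((L : End ℂ E).restrict hLW)
  obtain ⟨w, hw⟩ := hc.exists_hasEigenvector
  have hLw : L w = c • (w : E) := congr_arg Subtype.val hw.apply_eq_smul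
  have hw0 : (w : E) ≠ 0 := by simpa using hw.2
  refine ⟨c, ?_, ?_⟩
  · rw [spectrum_eq, ← End.hasEigenvalue_iff_mem_spectrum]
    exact End.hasEigenvalue_of_hasEigenvector ⟨End.mem_eigenspace_iff.mpr hLw, hw0⟩
  · have hexp : exp L w = μ • (w : E) := End.mem_eigenspace_iff.mp w.2
    rw [exp_apply_of_apply_eq_smul hLw, ← Complex.exp_eq_exp_ℂ] at hexp
    exact smul_left_injective ℂ hw0 hexp

theorem ContinuousLinearMap.spectralRadius_exp_lt (L : E →L[ℂ] E) {η : ℝ}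
    (h : ∀ c ∈ spectrum ℂ L, c.re < η) :
    spectralRadius ℂ (exp L) < ENNReal.ofReal (Real.exp η) := by
  have : CompleteSpace E := FiniteDimensional.complete ℂ E
  rcases (spectrum ℂ (exp L)).eq_empty_or_nonempty with hempty | hne
  · simp [spectralRadius, hempty, Real.exp_pos]
  · obtain ⟨μ, hμ, hμr⟩ := spectrum.exists_nnnorm_eq_spectralRadius_of_nonempty hne
    obtain ⟨c, hc, rfl⟩ := L.exists_exp_eq_of_mem_spectrum_exp hμ
    rw [← hμr, ← enorm_eq_nnnorm, ← ofReal_norm, ENNReal.ofReal_lt_ofReal_iff (Real.exp_pos η),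
      Complex.norm_exp]
    exact Real.exp_lt_exp.mpr (h c hc)

end Spectrum

section GrowthBound

theorem spectrum.exists_norm_pow_le_mul_pow_of_spectralRadius_lt {𝔸 : Type*} [NormedRing 𝔸]
    [NormedAlgebra ℂ 𝔸] [CompleteSpace 𝔸] (a : 𝔸) {r : ℝ}
    (h : spectralRadius ℂ a < ENNReal.ofReal r) : ∃ K, ∀ n : ℕ, ‖a ^ n‖ ≤ K * r ^ n := by
  have hr : 0 < r := ENNReal.ofReal_pos.mp (zero_le.trans_lt h)
  have hev : ∀ᶠ n : ℕ in atTop, ‖a ^ n‖ / r ^ n ≤ 1 := by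
    filter_upwards [(pow_norm_pow_one_div_tendsto_nhds_spectralRadius a).eventually_lt_const h,
      eventually_ge_atTop 1] with n hn hn1
    rw [ENNReal.ofReal_lt_ofReal_iff hr, one_div,
      Real.rpow_inv_lt_iff_of_pos (norm_nonneg _) hr.le (by positivity), Real.rpow_natCast] at hn
    exact (div_le_one (by positivity)).mpr hn.le
  obtain ⟨K, hK⟩ := (isBoundedUnder_of_eventually_le hev).bddAbove_range
  exact ⟨K, fun n => (div_le_iff₀ (by positivity)).mp (hK ⟨n, rfl⟩)⟩

theorem NormedSpace.exists_norm_exp_smul_le_of_norm_exp_pow_le {𝕂 𝔸 : Type*} [RCLike 𝕂]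
    [NormedRing 𝔸] [NormedAlgebra 𝕂 𝔸] [CompleteSpace 𝔸] {a : 𝔸} {K η : ℝ}
    (h : ∀ n : ℕ, ‖exp a ^ n‖ ≤ K * Real.exp (η * n)) :
    ∃ C, 0 ≤ C ∧ ∀ t : ℝ, 0 ≤ t → ‖exp ((t : 𝕂) • a)‖ ≤ C * Real.exp (η * t) := by
  let : NormedAlgebra ℚ 𝔸 := .restrictScalars ℚ 𝕂 𝔸
  obtain ⟨D, hD⟩ := (isCompact_Icc (a := (0 : ℝ)) (b := 1)).exists_bound_of_continuousOn
    (f := fun s : ℝ => exp ((s : 𝕂) • a)) (by fun_prop)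
  have hK : 0 ≤ K := by simpa using (norm_nonneg _).trans (h 0)
  have hD0 : 0 ≤ D := (norm_nonneg _).trans (hD 0 ⟨le_rfl, zero_le_one⟩)
  refine ⟨K * D * Real.exp |η|, by positivity, fun t ht => ?_⟩
  set n := ⌊t⌋₊
  have hs : t - n ∈ Icc (0 : ℝ) 1 :=
    ⟨sub_nonneg.2 (Nat.floor_le ht), by linarith [Nat.lt_floor_add_one t]⟩
  have hsplit : exp ((t : 𝕂) • a) = exp a ^ n * exp (((t - n : ℝ) : 𝕂) • a) := by
    rw [← exp_nsmul, ← Nat.cast_smul_eq_nsmul 𝕂,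
      ← exp_add_of_commute (((Commute.refl a).smul_left _).smul_right _), ← add_smul]
    push_cast
    ring_nf
  have hexp : Real.exp (η * n) ≤ Real.exp |η| * Real.exp (η * t) := by
    rw [← Real.exp_add]
    gcongr
    nlinarith [neg_abs_le η, abs_nonneg η, hs.1, hs.2]
  calc ‖exp ((t : 𝕂) • a)‖ ≤ ‖exp a ^ n‖ * ‖exp (((t - n : ℝ) : 𝕂) • a)‖ :=
        hsplit ▸ norm_mul_le _ _
    _ ≤ K * Real.exp (η * n) * D := by gcongr; exacts [h n, hD _ hs]
    _ ≤ K * (Real.exp |η| * Real.exp (η * t)) * D := by gcongr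
    _ = K * D * Real.exp |η| * Real.exp (η * t) := by ring

theorem NormedSpace.exists_norm_exp_smul_le_of_spectralRadius_exp_lt {𝔸 : Type*} [NormedRing 𝔸]
    [NormedAlgebra ℂ 𝔸] [CompleteSpace 𝔸] {a : 𝔸} {η : ℝ}
    (h : spectralRadius ℂ (exp a) < ENNReal.ofReal (Real.exp η)) :
    ∃ C, 0 ≤ C ∧ ∀ t : ℝ, 0 ≤ t → ‖exp ((t : ℂ) • a)‖ ≤ C * Real.exp (η * t) := by
  obtain ⟨K, hK⟩ := spectrum.exists_norm_pow_le_mul_pow_of_spectralRadius_lt _ h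
  exact exists_norm_exp_smul_le_of_norm_exp_pow_le fun n => by
    simpa [← Real.exp_nat_mul, mul_comm] using hK n

end GrowthBound

namespace Matrix

variable {n : Type*} [Fintype n] [DecidableEq n]

theorem continuous_toEuclideanCLM {𝕜 : Type*} [RCLike 𝕜] :
    Continuous (toEuclideanCLM (𝕜 := 𝕜) (n := n)) :=
  LinearMap.continuous_of_finiteDimensional
    (toEuclideanCLM (𝕜 := 𝕜) (n := n)).toAlgEquiv.toLinearMap

theorem norm_toEuclideanCLM_le_norm_toEuclideanCLM_map_ofReal (N : Matrix n n ℝ) :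
    ‖toEuclideanCLM (𝕜 := ℝ) N‖ ≤ ‖toEuclideanCLM (𝕜 := ℂ) (N.map Complex.ofReal)‖ := by
  refine ContinuousLinearMap.opNorm_le_bound _ (norm_nonneg _) fun x => ?_
  let ι : EuclideanSpace ℝ n → EuclideanSpace ℂ n := fun v => WithLp.toLp 2 fun i => (v i : ℂ)
  have hι : ∀ v, ‖ι v‖ = ‖v‖ := fun v => by simp [ι, EuclideanSpace.norm_eq]
  have hN : toEuclideanCLM (𝕜 := ℂ) (N.map Complex.ofReal) (ι x) =
      ι (toEuclideanCLM (𝕜 := ℝ) N x) := by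
    ext i
    simp [ι, mulVec, dotProduct]
  rw [← hι, ← hι x, ← hN]
  exact ContinuousLinearMap.le_opNorm _ _

attribute [local instance] Matrix.linftyOpNormedRing Matrix.linftyOpNormedAlgebra

theorem norm_exp_smul_toEuclideanCLM_le_map_ofReal (N : Matrix n n ℝ) (t : ℝ) :
    ‖exp (t • toEuclideanCLM (𝕜 := ℝ) N)‖ ≤
      ‖exp ((t : ℂ) • toEuclideanCLM (𝕜 := ℂ) (N.map Complex.ofReal))‖ := by
  have hℝ : exp (t • toEuclideanCLM (𝕜 := ℝ) N) = toEuclideanCLM (𝕜 := ℝ) (exp (t • N)) := by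
    rw [← map_smul]
    exact (map_exp (toEuclideanCLM (𝕜 := ℝ) (n := n)) continuous_toEuclideanCLM _).symm
  have hℂ : exp ((t : ℂ) • toEuclideanCLM (𝕜 := ℂ) (N.map Complex.ofReal)) =
      toEuclideanCLM (𝕜 := ℂ) ((exp (t • N)).map Complex.ofReal) := by
    have hsmul : (t : ℂ) • N.map Complex.ofReal = (t • N).map Complex.ofReal := by
      ext i j
      simp
    rw [← map_smul, ← map_exp (toEuclideanCLM (𝕜 := ℂ) (n := n)) continuous_toEuclideanCLM,
      hsmul]
    exact congrArg _ (map_exp (Complex.ofRealHom.mapMatrix : Matrix n n ℝ →+* Matrix n n ℂ)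
      (continuous_id.matrix_map Complex.continuous_ofReal) _).symm
  rw [hℝ, hℂ]
  exact norm_toEuclideanCLM_le_norm_toEuclideanCLM_map_ofReal _

theorem exists_norm_exp_smul_toEuclideanCLM_le (A : Matrix n n ℝ) {η : ℝ}
    (hA : ∀ ρ ∈ spectrum ℂ (A.map Complex.ofReal), ρ.re < η) :
    ∃ C, 0 ≤ C ∧ ∀ t : ℝ, 0 ≤ t →
      ‖exp (t • toEuclideanCLM (𝕜 := ℝ) A)‖ ≤ C * Real.exp (η * t) := by
  set L := toEuclideanCLM (𝕜 := ℂ) (A.map Complex.ofReal)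
  have hL : ∀ c ∈ spectrum ℂ L, c.re < η := by rwa [AlgEquiv.spectrum_eq]
  obtain ⟨C, hC0, hC⟩ :=
    exists_norm_exp_smul_le_of_spectralRadius_exp_lt (L.spectralRadius_exp_lt hL)
  exact ⟨C, hC0, fun t ht => (norm_exp_smul_toEuclideanCLM_le_map_ofReal A t).trans (hC t ht)⟩

end Matrix

theorem le_mul_exp_of_le_add_mul_integral {u : ℝ → ℝ} {a b α β : ℝ} (hβ : 0 ≤ β)
    (hu : ContinuousOn u (Icc a b)) (hle : ∀ t ∈ Icc a b, u t ≤ α + β * ∫ s in a..t, u s) :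
    ∀ t ∈ Icc a b, u t ≤ α * Real.exp (β * (t - a)) := by
  intro t ht
  have hab : a ≤ b := ht.1.trans ht.2
  -- extend `u` continuously to `ℝ`, so that its integral is differentiable everywhere
  set v : ℝ → ℝ := fun x => u (projIcc a b hab x)
  have hv : Continuous v :=
    hu.comp_continuous continuous_projIcc.subtype_val fun x => (projIcc a b hab x).2
  have hvu : ∀ x ∈ Icc a b, v x = u x := fun x hx => by simp [v, projIcc_of_mem hab hx]
  have hint : ∀ x ∈ Icc a b, ∫ s in a..x, v s = ∫ s in a..x, u s := fun x hx =>
    intervalIntegral.integral_congr fun s hs => by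
      rw [uIcc_of_le hx.1] at hs
      exact hvu s ⟨hs.1, hs.2.trans hx.2⟩
  set h : ℝ → ℝ := fun x => α + β * ∫ s in a..x, v s
  have hderiv : ∀ x, HasDerivAt h (β * v x) x := fun x =>
    ((hv.integral_hasStrictDerivAt a x).hasDerivAt.const_mul β).const_add α
  have hgron := le_gronwallBound_of_liminf_deriv_right_le (f := h) (δ := α) (K := β) (ε := 0)
    (HasDerivAt.continuousOn fun x _ => hderiv x)
    (fun x _ r hr => (hderiv x).hasDerivWithinAt.liminf_right_slope_le hr) (by simp [h])
    (fun x hx => by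
      have hx' : x ∈ Icc a b := Ico_subset_Icc_self hx
      simpa [h, hvu x hx', hint x hx'] using mul_le_mul_of_nonneg_left (hle x hx') hβ) t ht
  rw [gronwallBound_ε0] at hgron
  calc u t ≤ h t := by simpa [h, hint t ht] using hle t ht
    _ ≤ α * Real.exp (β * (t - a)) := hgron

theorem NormedSpace.hasDerivAt_exp_sub_smul {𝔸 : Type*} [NormedRing 𝔸] [NormedAlgebra ℝ 𝔸]
    [CompleteSpace 𝔸] (x : 𝔸) (T s : ℝ) :
    HasDerivAt (fun r : ℝ => exp ((T - r) • x)) (-(exp ((T - s) • x) * x)) s :=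
  ((hasDerivAt_exp_smul_const x (T - s)).scomp s ((hasDerivAt_id s).const_sub T)).congr_deriv
    (by simp)

section PerturbedLinearODE

variable {E : Type*} [NormedAddCommGroup E] [NormedSpace ℝ E] [CompleteSpace E]
  {L : E →L[ℝ] E} {ξ y : ℝ → E} {a b : ℝ}

theorem eq_exp_smul_apply_add_integral (hab : a ≤ b) (hξ : ContinuousOn ξ (Icc a b))
    (hy : ∀ t ∈ Icc a b, HasDerivAt y (L (y t) + ξ t) t) :
    y b = exp ((b - a) • L) (y a) + ∫ s in a..b, exp ((b - s) • L) (ξ s) := by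
  have hderiv : ∀ s ∈ uIcc a b, HasDerivAt (fun r => exp ((b - r) • L) (y r))
      (exp ((b - s) • L) (ξ s)) s := fun s hs => by
    convert (hasDerivAt_exp_sub_smul L b s).clm_apply (hy s (uIcc_of_le hab ▸ hs)) using 1
    simp
  have hcont : Continuous fun s : ℝ => exp ((b - s) • L) :=
    continuous_iff_continuousAt.2 fun s => (hasDerivAt_exp_sub_smul L b s).continuousAt
  rw [intervalIntegral.integral_eq_sub_of_hasDerivAt hderiv
    (hcont.continuousOn.clm_apply (uIcc_of_le hab ▸ hξ)).intervalIntegrable]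
  simp

theorem exp_neg_mul_norm_le_add_integral {C η δ : ℝ}
    (hC : ∀ t, 0 ≤ t → ‖exp (t • L)‖ ≤ C * Real.exp (η * t)) (hab : a ≤ b)
    (hξ : ContinuousOn ξ (Icc a b)) (hy : ∀ t ∈ Icc a b, HasDerivAt y (L (y t) + ξ t) t)
    (hξy : ∀ t ∈ Icc a b, ‖ξ t‖ ≤ δ * ‖y t‖) :
    Real.exp (-η * (b - a)) * ‖y b‖ ≤
      C * ‖y a‖ + C * δ * ∫ s in a..b, Real.exp (-η * (s - a)) * ‖y s‖ := by
  set w : ℝ → ℝ := fun s => Real.exp (-η * (s - a)) * ‖y s‖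
  have hw : ContinuousOn w (Icc a b) := by
    have := HasDerivAt.continuousOn hy
    fun_prop
  have hfree : ‖exp ((b - a) • L) (y a)‖ ≤ Real.exp (η * (b - a)) * (C * ‖y a‖) := by
    calc ‖exp ((b - a) • L) (y a)‖ ≤ ‖exp ((b - a) • L)‖ * ‖y a‖ :=
          ContinuousLinearMap.le_opNorm _ _
      _ ≤ C * Real.exp (η * (b - a)) * ‖y a‖ := by gcongr; exact hC _ (sub_nonneg.2 hab)
      _ = Real.exp (η * (b - a)) * (C * ‖y a‖) := by ring
  have hforced : ‖∫ s in a..b, exp ((b - s) • L) (ξ s)‖ ≤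
      ∫ s in a..b, Real.exp (η * (b - a)) * (C * δ * w s) := by
    refine intervalIntegral.norm_integral_le_of_norm_le hab (ae_of_all _ fun s hs => ?_)
      ((uIcc_of_le hab ▸ hw).const_mul _ |>.const_mul _).intervalIntegrable
    have hΦ := hC _ (sub_nonneg.2 hs.2)
    calc ‖exp ((b - s) • L) (ξ s)‖ ≤ ‖exp ((b - s) • L)‖ * ‖ξ s‖ :=
          ContinuousLinearMap.le_opNorm _ _
      _ ≤ C * Real.exp (η * (b - s)) * (δ * ‖y s‖) :=
        mul_le_mul hΦ (hξy s (Ioc_subset_Icc_self hs)) (norm_nonneg _) ((norm_nonneg _).trans hΦ)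
      _ = Real.exp (η * (b - a)) * (C * δ * w s) := by
        rw [show η * (b - s) = η * (b - a) + -η * (s - a) by ring, Real.exp_add]
        ring
  have hyb : ‖y b‖ ≤ Real.exp (η * (b - a)) * (C * ‖y a‖ + C * δ * ∫ s in a..b, w s) := by
    rw [eq_exp_smul_apply_add_integral hab hξ hy]
    calc _ ≤ _ := norm_add_le _ _
      _ ≤ _ := add_le_add hfree hforced
      _ = _ := by simp only [intervalIntegral.integral_const_mul]; ring
  calc Real.exp (-η * (b - a)) * ‖y b‖
      ≤ Real.exp (-η * (b - a)) * (Real.exp (η * (b - a)) *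
          (C * ‖y a‖ + C * δ * ∫ s in a..b, w s)) := by gcongr
    _ = C * ‖y a‖ + C * δ * ∫ s in a..b, w s := by
      rw [← mul_assoc, ← Real.exp_add]
      simp

theorem norm_le_mul_exp_of_hasDerivAt {C η δ : ℝ} (hC0 : 0 ≤ C) (hδ : 0 ≤ δ)
    (hC : ∀ t, 0 ≤ t → ‖exp (t • L)‖ ≤ C * Real.exp (η * t)) (hab : a ≤ b)
    (hξ : ContinuousOn ξ (Icc a b)) (hy : ∀ t ∈ Icc a b, HasDerivAt y (L (y t) + ξ t) t)
    (hξy : ∀ t ∈ Icc a b, ‖ξ t‖ ≤ δ * ‖y t‖) :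
    ‖y b‖ ≤ C * ‖y a‖ * Real.exp ((η + C * δ) * (b - a)) := by
  have hycont := HasDerivAt.continuousOn hy
  have hu := le_mul_exp_of_le_add_mul_integral (u := fun s => Real.exp (-η * (s - a)) * ‖y s‖)
    (mul_nonneg hC0 hδ) (by fun_prop)
    (fun T hT => exp_neg_mul_norm_le_add_integral hC hT.1
      (hξ.mono (Icc_subset_Icc_right hT.2)) (fun t ht => hy t ⟨ht.1, ht.2.trans hT.2⟩)
      (fun t ht => hξy t ⟨ht.1, ht.2.trans hT.2⟩)) b ⟨hab, le_rfl⟩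
  calc ‖y b‖ = Real.exp (η * (b - a)) * (Real.exp (-η * (b - a)) * ‖y b‖) := by
        rw [← mul_assoc, ← Real.exp_add]
        simp
    _ ≤ Real.exp (η * (b - a)) * (C * ‖y a‖ * Real.exp (C * δ * (b - a))) := by gcongr
    _ = C * ‖y a‖ * Real.exp ((η + C * δ) * (b - a)) := by
      rw [add_mul, Real.exp_add]
      ring

end PerturbedLinearODE

/-- **Perturbed linear ODEs with spectral gap (continuous-time Gronwall estimate).**
Let `A` be a real `m × m` matrix and `η ∈ ℝ` with `η > Re ρ` for every complex eigenvalue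
`ρ` of `A`. Then there is `C ≥ 0` with `‖e^{tA}‖ ≤ C e^{ηt}` for all `t ≥ 0`, such that
for every `δ > 0`, every `t₀`, every continuous `ξ : [t₀,∞) → ℝ^m` and every differentiable
`y` with `y' = Ay + ξ` and `‖ξ(t)‖ ≤ δ‖y(t)‖` on `[t₀,∞)`, one has
`‖y(t)‖ ≤ C‖y(t₀)‖ e^{(η + Cδ)(t - t₀)}` for all `t ≥ t₀`. -/
theorem perturbed_linear_ode_exponential_bound
    (m : ℕ) (A : Matrix (Fin m) (Fin m) ℝ) (η : ℝ)
    (hA : ∀ ρ ∈ spectrum ℂ (A.map Complex.ofReal), ρ.re < η) :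
    ∃ C : ℝ, 0 ≤ C ∧
      (∀ t : ℝ, 0 ≤ t →
        ‖NormedSpace.exp
            (t • (Matrix.toEuclideanCLM (𝕜 := ℝ) A :
              EuclideanSpace ℝ (Fin m) →L[ℝ] EuclideanSpace ℝ (Fin m)))‖ ≤
          C * Real.exp (η * t)) ∧
      ∀ δ : ℝ, 0 < δ → ∀ t₀ : ℝ, ∀ ξ y : ℝ → EuclideanSpace ℝ (Fin m),
        ContinuousOn ξ (Ici t₀) →
        (∀ t ∈ Ici t₀, HasDerivAt y (Matrix.toEuclideanCLM (𝕜 := ℝ) A (y t) + ξ t) t) →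
        (∀ t ∈ Ici t₀, ‖ξ t‖ ≤ δ * ‖y t‖) →
        ∀ t ∈ Ici t₀, ‖y t‖ ≤ C * ‖y t₀‖ * Real.exp ((η + C * δ) * (t - t₀)) := by
  obtain ⟨C, hC0, hC⟩ := A.exists_norm_exp_smul_toEuclideanCLM_le hA
  refine ⟨C, hC0, hC, fun δ hδ t₀ ξ y hξ hy hξy t ht => ?_⟩
  exact norm_le_mul_exp_of_hasDerivAt hC0 hδ.le hC ht (hξ.mono Icc_subset_Ici_self)
    (fun s hs => hy s hs.1) (fun s hs => hξy s hs.1)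
end
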